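/- Fix positive integers r and d, and for each n ≥ 2r let L*_n denote the infimum of E[ℓ(c(X^n))] over all adaptive (r,d,n)-locally decodable source codes c. Then there exist constants c1, c2 > 0 such that for all sufficiently large n: c1 · n^{r/(rd+1)} ≤ L*_n ≤ c2 · n^{r/(rd+1)}. -/

import Mathlib

open Filter MeasureTheory

/-- A binary decision tree: internal nodes probe a (1-indexed) position of the
codeword, leaves output a bit. -/
inductive DTree : Type
  | leaf (b : Bool) : DTree
  | node (pos : ℕ) (lo hi : DTree) : DTree

namespace DTree

/-- Depth of a decision tree. -/
def depth : DTree → ℕ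
  | leaf _ => 0
  | node _ l h => 1 + max l.depth h.depth

/-- All probed positions lie in `{1, …, ℓ}`. -/
def boundedBy (ℓ : ℕ) : DTree → Prop
  | leaf _ => True
  | node p l h => 1 ≤ p ∧ p ≤ ℓ ∧ l.boundedBy ℓ ∧ h.boundedBy ℓ

/-- Evaluate the tree on a codeword `w` (positions are 1-indexed). -/
def eval (w : List Bool) : DTree → Bool
  | leaf b => b
  | node p l h => if w.getD (p - 1) false then h.eval w else l.eval w

end DTree

/-- `x : Fin n → Bool` has exactly `r` ones. -/
def Sparse (n r : ℕ) (x : Fin n → Bool) : Prop :=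
  (Finset.univ.filter fun i => x i = true).card = r

instance (n r : ℕ) : DecidablePred (Sparse n r) := fun _ => Nat.decEq _ r

/-- The type of `r`-sparse binary vectors of length `n`. -/
abbrev SparseVec (n r : ℕ) := {x : Fin n → Bool // Sparse n r x}

/-- An adaptive `(r,d,n)`-locally decodable source code. -/
structure AdaptiveLDC (r d n : ℕ) where
  enc : SparseVec n r → List Bool
  enc_inj : Function.Injective enc
  tree : Fin n → ℕ → DTree
  depth_le : ∀ j ℓ, (tree j ℓ).depth ≤ d
  bounded : ∀ j ℓ, (tree j ℓ).boundedBy ℓ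
  correct : ∀ x (j : Fin n), (tree j (enc x).length).eval (enc x) = x.1 j

/-- Expected codeword length under the uniform distribution on `r`-sparse vectors. -/
noncomputable def expLenA {r d n : ℕ} (c : AdaptiveLDC r d n) : ℝ :=
  (∑ x : SparseVec n r, ((c.enc x).length : ℝ)) / (n.choose r : ℝ)

/-!
Lower bound: on codewords of a given length `ℓ`, the at most `r d` probes, with their answers,
made by the decoders of the `r` support coordinates already determine the vector, so at most
`(2ℓ + 1) ^ (r d)` vectors have codewords of length `ℓ`. Hence half of the `C(n, r) ≍ n ^ r` vectors
have codewords of length `≳ n ^ (r / (r d + 1))`.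

Upper bound: let `m ≈ n ^ (1 / (r d + 1))`. A difference `< m ^ (r d + 1)` has at most `r d` prime
factors `> m`, so some `p` among `r ^ 3 d + 1` primes in `(m, 2 ^ (r ^ 3 d + 1) m]` is injective
modulo on the support. The length of the codeword encodes `p` and the residues of the support
(`O(m ^ r)` possibilities); the codeword stores one-hot the `d` base-`m ^ r` digits of the quotient
`e / p < m ^ (r d)` of each support element `e`, and the decoder of `j` checks the digits of `j / p`
in the row of its residue.
-/

namespace SparseVec

variable {n r : ℕ}

def supp (x : SparseVec n r) : Finset (Fin n) :=
  Finset.univ.filter fun i => x.1 i = true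

theorem card_supp (x : SparseVec n r) : x.supp.card = r := x.2

theorem mem_supp {x : SparseVec n r} {j : Fin n} : j ∈ x.supp ↔ x.1 j = true := by
  simp [supp]

theorem supp_injective : Function.Injective (supp : SparseVec n r → Finset (Fin n)) :=
  fun x x' h => Subtype.ext <| funext fun j => Bool.eq_iff_iff.mpr <| by
    rw [← mem_supp, ← mem_supp, h]

theorem card_eq_choose : Fintype.card (SparseVec n r) = n.choose r := by
  let e : SparseVec n r ≃ {s : Finset (Fin n) // s.card = r} :=
    { toFun x := ⟨x.supp, x.card_supp⟩
      invFun s := ⟨fun i => decide (i ∈ s.1), by simpa [Sparse] using s.2⟩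
      left_inv x := supp_injective <| by ext; simp [supp]
      right_inv s := by ext; simp [supp] }
  rw [Fintype.card_congr e, Fintype.card_finset_len, Fintype.card_fin]

end SparseVec

namespace DTree

def path (w : List Bool) : DTree → List (ℕ × Bool)
  | leaf _ => []
  | node p l h =>
      (p, w.getD (p - 1) false) :: if w.getD (p - 1) false then h.path w else l.path w

theorem length_path_le (w : List Bool) : ∀ T : DTree, (T.path w).length ≤ T.depth
  | leaf _ => le_rfl
  | node p l h => by
      have := length_path_le w l
      have := length_path_le w h
      simp only [path, depth, List.length_cons]
      split <;> omega

theorem getD_of_mem_path {w : List Bool} :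
    ∀ {T : DTree} {q : ℕ × Bool}, q ∈ T.path w → w.getD (q.1 - 1) false = q.2
  | leaf _, _, hq => by simp [path] at hq
  | node p l h, q, hq => by
      simp only [path, List.mem_cons] at hq
      rcases hq with rfl | hq
      · rfl
      · split at hq
        · exact getD_of_mem_path hq
        · exact getD_of_mem_path hq

theorem mem_Icc_of_mem_path {w : List Bool} {ℓ : ℕ} :
    ∀ {T : DTree}, T.boundedBy ℓ → ∀ {q : ℕ × Bool}, q ∈ T.path w → q.1 ∈ Finset.Icc 1 ℓ
  | leaf _, _, _, hq => by simp [path] at hq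
  | node p l h, ⟨h1, h2, hl, hh⟩, q, hq => by
      simp only [path, List.mem_cons] at hq
      rcases hq with rfl | hq
      · exact Finset.mem_Icc.mpr ⟨h1, h2⟩
      · split at hq
        · exact mem_Icc_of_mem_path hh hq
        · exact mem_Icc_of_mem_path hl hq

theorem eval_eq_of_forall_mem_path {w w' : List Bool} :
    ∀ {T : DTree}, (∀ q ∈ T.path w, w'.getD (q.1 - 1) false = q.2) → T.eval w' = T.eval w
  | leaf _, _ => rfl
  | node p l h, hag => by
      have hp : w'.getD (p - 1) false = w.getD (p - 1) false := hag _ List.mem_cons_self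
      have hrest := fun q hq => hag q (List.mem_cons_of_mem _ hq)
      rw [eval, eval, hp]
      cases hb : w.getD (p - 1) false <;> simp only [hb] at hrest <;>
        simpa using eval_eq_of_forall_mem_path hrest

theorem boundedBy_mono {ℓ ℓ' : ℕ} (hℓ : ℓ ≤ ℓ') : ∀ {T : DTree}, T.boundedBy ℓ → T.boundedBy ℓ'
  | leaf _, _ => trivial
  | node _ _ _, ⟨h1, h2, hl, hh⟩ => ⟨h1, h2.trans hℓ, boundedBy_mono hℓ hl, boundedBy_mono hℓ hh⟩

theorem eval_append_of_boundedBy {w v : List Bool} :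
    ∀ {T : DTree}, T.boundedBy w.length → T.eval (w ++ v) = T.eval w
  | leaf _, _ => rfl
  | node p _ _, ⟨h1, h2, hl, hh⟩ => by
      rw [eval, eval, List.getD_append _ _ _ _ (by omega), eval_append_of_boundedBy hl,
        eval_append_of_boundedBy hh]

def allTrue : List ℕ → DTree
  | [] => leaf true
  | p :: ps => node (p + 1) (leaf false) (allTrue ps)

theorem depth_allTrue : ∀ ps : List ℕ, (allTrue ps).depth = ps.length
  | [] => rfl
  | p :: ps => by simp [allTrue, depth, depth_allTrue ps, Nat.add_comm]

theorem boundedBy_allTrue {ℓ : ℕ} : ∀ {ps : List ℕ}, (∀ p ∈ ps, p < ℓ) → (allTrue ps).boundedBy ℓ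
  | [], _ => trivial
  | p :: ps, h => ⟨by omega, h p List.mem_cons_self, trivial,
      boundedBy_allTrue fun q hq => h q (List.mem_cons_of_mem _ hq)⟩

theorem eval_allTrue (w : List Bool) :
    ∀ ps : List ℕ, (allTrue ps).eval w = decide (∀ p ∈ ps, w.getD p false = true)
  | [] => by simp [allTrue, eval]
  | p :: ps => by simp [allTrue, eval, eval_allTrue w ps]

end DTree

theorem expLenA_nonneg {r d n : ℕ} (c : AdaptiveLDC r d n) : 0 ≤ expLenA c := by
  unfold expLenA; positivity

theorem Finset.card_le_of_injOn_list {β α : Type*} {s : Finset β} {A : Finset α} {k : ℕ}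
    (f : β → List α) (hf : Set.InjOn f s) (hlen : ∀ x ∈ s, (f x).length ≤ k)
    (hA : ∀ x ∈ s, ∀ a ∈ f x, a ∈ A) : s.card ≤ (A.card + 1) ^ k := by
  calc s.card ≤ (Fintype.piFinset fun _ : Fin k => A.insertNone).card := by
        refine Finset.card_le_card_of_injOn (fun x i => (f x)[(i : ℕ)]?) (fun x hx => ?_)
          (fun x hx x' hx' h => hf hx hx' <| List.ext_getElem? fun i => ?_)
        · simp only [Finset.mem_coe, Fintype.mem_piFinset]
          intro i
          cases hi : (f x)[(i : ℕ)]? with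
          | none => simp
          | some a => simpa using hA x hx a (List.mem_of_getElem? hi)
        · by_cases hi : i < k
          · exact congrFun h ⟨i, hi⟩
          · rw [List.getElem?_eq_none (by have := hlen x hx; omega),
              List.getElem?_eq_none (by have := hlen x' hx'; omega)]
    _ = (A.card + 1) ^ k := by simp

theorem Finset.mul_card_le_two_mul_sum {ι : Type*} (s : Finset ι) (f : ι → ℕ) (t : ℕ)
    (h : 2 * (s.filter (f · < t)).card ≤ s.card) : t * s.card ≤ 2 * ∑ x ∈ s, f x := by
  have hsplit := Finset.card_filter_add_card_filter_not (s := s) (f · < t)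
  have hlong : (s.filter fun x => ¬f x < t).card * t ≤ ∑ x ∈ s, f x :=
    calc (s.filter fun x => ¬f x < t).card * t ≤ ∑ x ∈ s.filter (fun x => ¬f x < t), f x := by
          simpa using Finset.card_nsmul_le_sum _ f t fun x hx =>
            not_lt.mp (Finset.mem_filter.mp hx).2
      _ ≤ ∑ x ∈ s, f x := Finset.sum_le_sum_of_subset (Finset.filter_subset _ _)
  nlinarith

namespace AdaptiveLDC

variable {r d n : ℕ} (c : AdaptiveLDC r d n)

noncomputable def cert (x : SparseVec n r) : List (ℕ × Bool) :=
  x.supp.toList.flatMap fun j => (c.tree j (c.enc x).length).path (c.enc x)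

theorem mem_cert {x : SparseVec n r} {q : ℕ × Bool} :
    q ∈ c.cert x ↔ ∃ j ∈ x.supp, q ∈ (c.tree j (c.enc x).length).path (c.enc x) := by
  simp [cert]

theorem length_cert_le (x : SparseVec n r) : (c.cert x).length ≤ r * d := by
  rw [cert, List.length_flatMap]
  refine (List.sum_le_card_nsmul _ d fun a ha => ?_).trans_eq ?_
  · obtain ⟨j, -, rfl⟩ := List.mem_map.mp ha
    exact (DTree.length_path_le _ _).trans (c.depth_le _ _)
  · rw [List.length_map, Finset.length_toList, x.card_supp, smul_eq_mul]

/-- The decoder of a support coordinate of `x` reads only bits recorded in the certificate, so it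
answers `true` on `c.enc x'` too. -/
theorem supp_subset_of_cert_eq {x x' : SparseVec n r}
    (hlen : (c.enc x).length = (c.enc x').length) (hcert : c.cert x = c.cert x') :
    x.supp ⊆ x'.supp := by
  intro j hj
  have hagree : ∀ q ∈ (c.tree j (c.enc x).length).path (c.enc x),
      (c.enc x').getD (q.1 - 1) false = q.2 := fun q hq => by
    obtain ⟨_, -, hq'⟩ := c.mem_cert.mp (hcert ▸ c.mem_cert.mpr ⟨j, hj, hq⟩)
    exact DTree.getD_of_mem_path hq'
  rw [SparseVec.mem_supp, ← c.correct x', ← hlen, DTree.eval_eq_of_forall_mem_path hagree,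
    c.correct, ← SparseVec.mem_supp]
  exact hj

theorem card_length_eq_le (ℓ : ℕ) :
    (Finset.univ.filter fun x => (c.enc x).length = ℓ).card ≤ (2 * ℓ + 1) ^ (r * d) := by
  have hA : (Finset.Icc 1 ℓ ×ˢ (Finset.univ : Finset Bool)).card = 2 * ℓ := by simp [mul_comm]
  rw [← hA]
  refine Finset.card_le_of_injOn_list c.cert (fun x hx x' hx' h => ?_)
    (fun x _ => c.length_cert_le x) (fun x hx q hq => ?_)
  · have hlen : (c.enc x).length = (c.enc x').length := by simp_all
    exact SparseVec.supp_injective <| (c.supp_subset_of_cert_eq hlen h).antisymm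
      (c.supp_subset_of_cert_eq hlen.symm h.symm)
  · obtain ⟨j, -, hq⟩ := (c.mem_cert).mp hq
    simp only [Finset.mem_filter, Finset.mem_univ, true_and] at hx
    exact Finset.mem_product.mpr ⟨hx ▸ DTree.mem_Icc_of_mem_path (c.bounded _ _) hq,
      Finset.mem_univ _⟩

theorem card_length_lt_le (t : ℕ) :
    (Finset.univ.filter fun x => (c.enc x).length < t).card ≤ t * (2 * t) ^ (r * d) := by
  have hsplit : Finset.univ.filter (fun x => (c.enc x).length < t) =
      (Finset.range t).biUnion fun ℓ => Finset.univ.filter fun x => (c.enc x).length = ℓ := by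
    ext x; simp
  rw [hsplit]
  refine Finset.card_biUnion_le.trans ?_
  calc _ ≤ ∑ _ℓ ∈ Finset.range t, (2 * t) ^ (r * d) := Finset.sum_le_sum fun ℓ hℓ =>
        (c.card_length_eq_le ℓ).trans <|
          Nat.pow_le_pow_left (by have := Finset.mem_range.mp hℓ; omega) _
    _ = t * (2 * t) ^ (r * d) := by simp

theorem half_le_expLenA (t : ℕ) (h : 2 * (t * (2 * t) ^ (r * d)) ≤ n.choose r) :
    (t : ℝ) / 2 ≤ expLenA c := by
  rcases t.eq_zero_or_pos with rfl | ht
  · simpa using expLenA_nonneg c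
  have hN : 0 < n.choose r := lt_of_lt_of_le (by positivity) h
  have hmarkov := Finset.mul_card_le_two_mul_sum Finset.univ (fun x => (c.enc x).length) t
    (by rw [Finset.card_univ, SparseVec.card_eq_choose]; have := c.card_length_lt_le t; omega)
  rw [Finset.card_univ, SparseVec.card_eq_choose] at hmarkov
  rw [expLenA, le_div_iff₀ (by exact_mod_cast hN), div_mul_eq_mul_div, div_le_iff₀ two_pos,
    mul_comm _ (2 : ℝ)]
  exact_mod_cast hmarkov

end AdaptiveLDC

theorem Nat.half_pow_div_factorial_le_choose {n r : ℕ} (h : 2 * r ≤ n) :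
    ((n : ℝ) / 2) ^ r / r.factorial ≤ n.choose r := by
  refine le_trans ?_ (Nat.pow_le_choose r n)
  gcongr
  rw [Nat.cast_sub (by omega)]
  push_cast
  have : (2 * r : ℝ) ≤ n := by exact_mod_cast h
  linarith

theorem eventually_le_expLenA (r d : ℕ) (hr : 1 ≤ r) : ∃ c₁ > 0, ∀ᶠ n : ℕ in atTop,
    ∀ c : AdaptiveLDC r d n, c₁ * (n : ℝ) ^ ((r : ℝ) / (r * d + 1 : ℝ)) ≤ expLenA c := by
  set α : ℝ := (r : ℝ) / (r * d + 1 : ℝ)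
  have hα : 0 < α := by unfold α; positivity
  set C : ℝ := 2 ^ (r * d + 1 + r) * r.factorial
  have hC : 1 ≤ C := one_le_mul_of_one_le_of_one_le (one_le_pow₀ one_le_two)
    (by exact_mod_cast r.factorial_pos)
  refine ⟨1 / (4 * C), by positivity, ?_⟩
  have hlarge : ∀ᶠ n : ℕ in atTop, 2 * C ≤ (n : ℝ) ^ α :=
    ((tendsto_rpow_atTop hα).comp tendsto_natCast_atTop_atTop).eventually_ge_atTop _
  filter_upwards [eventually_ge_atTop (2 * r), hlarge] with n hn hnα c
  set y := (n : ℝ) ^ α / C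
  have hy : 2 ≤ y := by rw [le_div_iff₀ (by positivity)]; linarith
  have hyt : y / 2 ≤ ⌊y⌋₊ := by linarith [Nat.sub_one_lt_floor y]
  have hypow : y ^ (r * d + 1) ≤ (n : ℝ) ^ r / C := by
    have hnα : ((n : ℝ) ^ α) ^ (r * d + 1) = (n : ℝ) ^ r := by
      rw [← Real.rpow_natCast, ← Real.rpow_mul (by positivity), ← Real.rpow_natCast]
      congr 1
      unfold α; push_cast; field_simp
    rw [div_pow, hnα]
    exact div_le_div_of_nonneg_left (by positivity) (by positivity) (le_self_pow₀ hC (by omega))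
  have hcount : 2 * (⌊y⌋₊ * (2 * ⌊y⌋₊) ^ (r * d)) ≤ n.choose r := by
    have : (2 * (⌊y⌋₊ * (2 * ⌊y⌋₊) ^ (r * d)) : ℝ) ≤ n.choose r :=
      calc (2 * (⌊y⌋₊ * (2 * ⌊y⌋₊) ^ (r * d)) : ℝ) = 2 ^ (r * d + 1) * ⌊y⌋₊ ^ (r * d + 1) := by
            ring
        _ ≤ 2 ^ (r * d + 1) * ((n : ℝ) ^ r / C) := by
            gcongr
            exact (pow_le_pow_left₀ (by positivity) (Nat.floor_le (by positivity)) _).trans hypow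
        _ = ((n : ℝ) / 2) ^ r / r.factorial := by
            unfold C; rw [div_pow]; field_simp; ring
        _ ≤ n.choose r := Nat.half_pow_div_factorial_le_choose hn
    exact_mod_cast this
  calc 1 / (4 * C) * (n : ℝ) ^ α = y / 2 / 2 := by unfold y; field_simp; ring
    _ ≤ ⌊y⌋₊ / 2 := by gcongr
    _ ≤ expLenA c := c.half_le_expLenA _ hcount

section TableCode

variable {r d β : ℕ}

def tablePos (i : Fin r) (k : Fin d) (v : Fin β) : Fin (r * d * β) :=
  finProdFinEquiv (finProdFinEquiv (i, k), v)

def tableCode (g : Fin r → Fin d → Fin β) : List Bool :=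
  List.ofFn fun a : Fin (r * d * β) =>
    decide (Function.uncurry g (finProdFinEquiv.symm (finProdFinEquiv.symm a).1) =
      (finProdFinEquiv.symm a).2)

theorem length_tableCode (g : Fin r → Fin d → Fin β) : (tableCode g).length = r * d * β :=
  List.length_ofFn

theorem getD_tableCode (g : Fin r → Fin d → Fin β) (i : Fin r) (k : Fin d) (v : Fin β) :
    (tableCode g).getD (tablePos i k v) false = decide (g i k = v) := by
  rw [List.getD_eq_getElem _ _ (by simp [length_tableCode])]
  simp only [tableCode, List.getElem_ofFn, Fin.eta, tablePos, Equiv.symm_apply_apply,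
    Function.uncurry_apply_pair]

def rowTest (i : Fin r) (w : Fin d → Fin β) : DTree :=
  DTree.allTrue ((List.finRange d).map fun k => (tablePos i k (w k) : ℕ))

theorem depth_rowTest (i : Fin r) (w : Fin d → Fin β) : (rowTest i w).depth = d := by
  simp [rowTest, DTree.depth_allTrue]

theorem boundedBy_rowTest (i : Fin r) (w : Fin d → Fin β) :
    (rowTest i w).boundedBy (r * d * β) :=
  DTree.boundedBy_allTrue (by simp)

theorem eval_rowTest_tableCode (g : Fin r → Fin d → Fin β) (i : Fin r) (w : Fin d → Fin β) :
    (rowTest i w).eval (tableCode g) = decide (g i = w) := by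
  simp only [rowTest, DTree.eval_allTrue, List.forall_mem_map, List.mem_finRange, true_implies,
    getD_tableCode, decide_eq_true_eq, funext_iff]

end TableCode

/-- The codeword is the body padded by the index of the shape, so the decoders learn the shape
from the length without probing. -/
theorem AdaptiveLDC.exists_of_shape {r d n B : ℕ} {S : Type*} [Fintype S]
    (shape : SparseVec n r → S) (body : SparseVec n r → List Bool)
    (length_body : ∀ x, (body x).length = B) (tree : S → Fin n → DTree)
    (depth_tree : ∀ s j, (tree s j).depth ≤ d) (boundedBy_tree : ∀ s j, (tree s j).boundedBy B)
    (eval_tree : ∀ x j, (tree (shape x) j).eval (body x) = x.1 j) :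
    ∃ c : AdaptiveLDC r d n, ∀ x, (c.enc x).length < B + Fintype.card S := by
  let e := Fintype.equivFin S
  let enc x := body x ++ List.replicate (e (shape x)) false
  let dec (j : Fin n) (ℓ : ℕ) : DTree :=
    if h : B ≤ ℓ ∧ ℓ - B < Fintype.card S then tree (e.symm ⟨ℓ - B, h.2⟩) j else .leaf false
  have length_enc x : (enc x).length = B + e (shape x) := by simp [enc, length_body]
  have correct x j : (dec j (enc x).length).eval (enc x) = x.1 j := by
    have h : B ≤ (enc x).length ∧ (enc x).length - B < Fintype.card S := by
      rw [length_enc]; omega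
    have hs : e.symm ⟨(enc x).length - B, h.2⟩ = shape x := by
      rw [e.symm_apply_eq]; ext; simp [length_enc]
    simp only [dec, dif_pos h, hs, enc]
    rw [DTree.eval_append_of_boundedBy (by rw [length_body]; exact boundedBy_tree _ _)]
    exact eval_tree x j
  refine ⟨{ enc := enc
            enc_inj := fun x x' hxx' => Subtype.ext <| funext fun j => by
              rw [← correct x j, hxx', correct x' j]
            tree := dec
            depth_le := fun j ℓ => ?_
            bounded := fun j ℓ => ?_
            correct := correct }, fun x => by simp only [length_enc]; omega⟩
  · unfold dec; split
    · exact depth_tree _ _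
    · exact Nat.zero_le _
  · unfold dec; split
    · exact DTree.boundedBy_mono (by omega) (boundedBy_tree _ _)
    · trivial

theorem Nat.exists_finset_primes (m T : ℕ) (hm : m ≠ 0) :
    ∃ P : Finset ℕ, P.card = T ∧ ∀ p ∈ P, p.Prime ∧ m < p ∧ p ≤ 2 ^ T * m := by
  induction T with
  | zero => exact ⟨∅, rfl, by simp⟩
  | succ T ih =>
    obtain ⟨P, hcard, hP⟩ := ih
    obtain ⟨q, hq, hlt, hle⟩ := Nat.exists_prime_lt_and_le_two_mul (2 ^ T * m) (by positivity)
    have hqP : q ∉ P := fun h => by have := (hP q h).2.2; omega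
    refine ⟨insert q P, by rw [Finset.card_insert_of_notMem hqP, hcard], ?_⟩
    simp only [Finset.mem_insert, forall_eq_or_imp]
    have h2T : m ≤ 2 ^ T * m := Nat.le_mul_of_pos_left m (by positivity)
    refine ⟨⟨hq, by omega, by rw [pow_succ]; linarith⟩, fun p hp => ?_⟩
    obtain ⟨hp, hmp, hpT⟩ := hP p hp
    exact ⟨hp, hmp, hpT.trans (by rw [pow_succ]; nlinarith)⟩

theorem Nat.pow_card_filter_dvd_le {P : Finset ℕ} {m D : ℕ} (hP : ∀ p ∈ P, p.Prime ∧ m < p)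
    (hD : D ≠ 0) : (m + 1) ^ (P.filter (· ∣ D)).card ≤ D :=
  calc (m + 1) ^ (P.filter (· ∣ D)).card
      ≤ ∏ p ∈ P.filter (· ∣ D), p :=
        Finset.pow_card_le_prod _ _ _ fun p hp => (hP p (Finset.mem_filter.mp hp).1).2
    _ ≤ D := Nat.le_of_dvd (Nat.pos_of_ne_zero hD) <| Finset.prod_primes_dvd D
        (fun p hp => (hP p (Finset.mem_filter.mp hp).1).1.prime)
        (fun _ hp => (Finset.mem_filter.mp hp).2)

theorem Nat.card_filter_mod_eq_le {P : Finset ℕ} {m k a b : ℕ} (hP : ∀ p ∈ P, p.Prime ∧ m < p)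
    (hab : a ≠ b) (ha : a < (m + 1) ^ (k + 1)) (hb : b < (m + 1) ^ (k + 1)) :
    (P.filter fun p => a % p = b % p).card ≤ k := by
  wlog hlt : a < b generalizing a b
  · simpa only [eq_comm] using this hab.symm hb ha (by omega)
  have hsub : P.filter (fun p => a % p = b % p) ⊆ P.filter (· ∣ b - a) :=
    Finset.monotone_filter_right _ fun _ _ hmod => (Nat.modEq_iff_dvd' hlt.le).mp hmod
  have hpow := (Nat.pow_le_pow_right (by omega) (Finset.card_le_card hsub)).trans
    (Nat.pow_card_filter_dvd_le hP (D := b - a) (by omega))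
  have hm : m ≠ 0 := by rintro rfl; simp at hb; omega
  have := (Nat.pow_lt_pow_iff_right (by omega : 1 < m + 1)).mp
    (hpow.trans_lt (by omega : b - a < (m + 1) ^ (k + 1)))
  omega

theorem Nat.exists_mem_injOn_mod {P S : Finset ℕ} {m k : ℕ} (hP : ∀ p ∈ P, p.Prime ∧ m < p)
    (hS : ∀ a ∈ S, a < (m + 1) ^ (k + 1)) (hcard : S.card * S.card * k < P.card) :
    ∃ p ∈ P, Set.InjOn (· % p) S := by
  by_contra! hbad
  have hcover : P ⊆ S.offDiag.biUnion fun ab => P.filter fun p => ab.1 % p = ab.2 % p := by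
    intro p hp
    obtain ⟨a, ha, b, hb, hmod, hab⟩ : ∃ a ∈ S, ∃ b ∈ S, a % p = b % p ∧ a ≠ b := by
      simpa [Set.InjOn] using hbad p hp
    exact Finset.mem_biUnion.mpr ⟨(a, b), Finset.mem_offDiag.mpr ⟨ha, hb, hab⟩,
      Finset.mem_filter.mpr ⟨hp, hmod⟩⟩
  have : P.card ≤ S.card * S.card * k :=
    calc P.card ≤ ∑ ab ∈ S.offDiag, (P.filter fun p => ab.1 % p = ab.2 % p).card :=
          (Finset.card_le_card hcover).trans Finset.card_biUnion_le
      _ ≤ ∑ _ab ∈ S.offDiag, k := Finset.sum_le_sum fun ab hab => by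
          obtain ⟨ha, hb, hne⟩ := Finset.mem_offDiag.mp hab
          exact Nat.card_filter_mod_eq_le hP hne (hS _ ha) (hS _ hb)
      _ ≤ S.card * S.card * k := by
          rw [Finset.sum_const, Finset.offDiag_card, smul_eq_mul]
          exact Nat.mul_le_mul_right _ (Nat.sub_le _ _)
  omega

theorem Nat.div_lt_pow_of_lt_pow_succ {a m p k : ℕ} (ha : a < m ^ (k + 1)) (hmp : m < p) :
    a / p < m ^ k := by
  rw [Nat.div_lt_iff_lt_mul (by omega)]
  calc a < m ^ k * m := by rwa [← pow_succ]
    _ ≤ m ^ k * p := Nat.mul_le_mul_left _ hmp.le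

theorem SparseVec.exists_mem_injOn_mod {r d n m : ℕ} {P : Finset ℕ} (x : SparseVec n r)
    (hP : ∀ p ∈ P, p.Prime ∧ m < p) (hPcard : r * r * (r * d) < P.card)
    (hn : n ≤ m ^ (r * d + 1)) : ∃ p ∈ P, Set.InjOn (fun e : Fin n => (e : ℕ) % p) x.supp := by
  obtain ⟨p, hp, hinj⟩ := Nat.exists_mem_injOn_mod (S := x.supp.map Fin.valEmbedding)
    (k := r * d) hP
    (fun a ha => by
      obtain ⟨e, -, rfl⟩ := Finset.mem_map.mp ha
      exact e.2.trans_le (hn.trans (Nat.pow_le_pow_left (by omega) _)))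
    (by simpa [x.card_supp] using hPcard)
  exact ⟨p, hp, fun e he e' he' h =>
    Fin.ext <| hinj (Finset.mem_map_of_mem _ he) (Finset.mem_map_of_mem _ he') h⟩

theorem SparseVec.mem_supp_iff_div_eq {n r p : ℕ} {x : SparseVec n r}
    (hinj : Set.InjOn (fun e : Fin n => (e : ℕ) % p) x.supp) {e j : Fin n} (he : e ∈ x.supp)
    (hmod : (e : ℕ) % p = j % p) : j ∈ x.supp ↔ (e : ℕ) / p = j / p := by
  constructor
  · intro hj
    rw [hinj he hj hmod]
  · intro hdiv
    rwa [← Fin.ext (Nat.ext_div_modEq hdiv hmod)]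

theorem exists_adaptiveLDC_of_primes {r d n m Q : ℕ} {P : Finset ℕ}
    (hP : ∀ p ∈ P, p.Prime ∧ m < p ∧ p ≤ Q) (hPcard : r * r * (r * d) < P.card)
    (hn : n ≤ m ^ (r * d + 1)) :
    ∃ c : AdaptiveLDC r d n, ∀ x, (c.enc x).length < r * d * m ^ r + P.card * Q ^ r := by
  choose p hpP hinj using fun x : SparseVec n r =>
    x.exists_mem_injOn_mod (fun p hp => ⟨(hP p hp).1, (hP p hp).2.1⟩) hPcard hn
  let elem (x : SparseVec n r) : Fin r ↪o Fin n := x.supp.orderEmbOfFin x.card_supp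
  have hquot (q : P) (j : Fin n) : (j : ℕ) / q < (m ^ r) ^ d := by
    rw [← pow_mul]
    exact Nat.div_lt_pow_of_lt_pow_succ (j.2.trans_le hn) (hP q q.2).2.1
  let digits (q : P) (j : Fin n) : Fin d → Fin (m ^ r) :=
    finFunctionFinEquiv.symm ⟨j / q, hquot q j⟩
  have digits_inj (q : P) (j j' : Fin n) : digits q j = digits q j' ↔ (j : ℕ) / q = j' / q := by
    simp [digits, Fin.ext_iff]
  obtain ⟨c, hc⟩ := AdaptiveLDC.exists_of_shape (d := d) (S := P × (Fin r → Fin Q))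
    (fun x => (⟨p x, hpP x⟩, fun i =>
      ⟨elem x i % p x, (Nat.mod_lt _ (hP _ (hpP x)).1.pos).trans_le (hP _ (hpP x)).2.2⟩))
    (fun x => tableCode fun i => digits ⟨p x, hpP x⟩ (elem x i)) (fun _ => length_tableCode _)
    (fun s j => if h : ∃ i, (s.2 i : ℕ) = j % s.1 then rowTest h.choose (digits s.1 j)
      else .leaf false)
    (fun s j => by split <;> simp [depth_rowTest, DTree.depth])
    (fun s j => by split <;> simp [boundedBy_rowTest, DTree.boundedBy])
    (fun x j => by
      dsimp only
      split
      · rename_i h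
        rw [eval_rowTest_tableCode, Bool.eq_iff_iff, decide_eq_true_iff, digits_inj,
          ← SparseVec.mem_supp, SparseVec.mem_supp_iff_div_eq (hinj x)
            (Finset.orderEmbOfFin_mem _ _ _) h.choose_spec]
      · rename_i h
        rw [DTree.eval, eq_comm, Bool.eq_false_iff, ne_eq, ← SparseVec.mem_supp,
          ← Finset.mem_coe, ← Finset.range_orderEmbOfFin _ x.card_supp]
        rintro ⟨i, rfl⟩
        exact h ⟨i, rfl⟩)
  refine ⟨c, fun x => (hc x).trans_eq ?_⟩
  simp

theorem exists_adaptiveLDC_length_le (r d : ℕ) : ∃ K : ℕ, ∀ n m : ℕ, m ≠ 0 →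
    n ≤ m ^ (r * d + 1) → ∃ c : AdaptiveLDC r d n, ∀ x, (c.enc x).length ≤ K * m ^ r := by
  set T := r * r * (r * d) + 1
  refine ⟨r * d + T * 2 ^ (T * r), fun n m hm hn => ?_⟩
  obtain ⟨P, hPcard, hP⟩ := Nat.exists_finset_primes m T hm
  obtain ⟨c, hc⟩ := exists_adaptiveLDC_of_primes hP (by omega) hn
  refine ⟨c, fun x => (hc x).le.trans_eq ?_⟩
  rw [hPcard, mul_pow, ← pow_mul]
  ring

theorem expLenA_le_of_length_le {r d n L : ℕ} (c : AdaptiveLDC r d n)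
    (h : ∀ x, (c.enc x).length ≤ L) : expLenA c ≤ L := by
  unfold expLenA
  rcases (n.choose r).eq_zero_or_pos with h0 | hpos
  · simp [h0]
  rw [div_le_iff₀ (by exact_mod_cast hpos), ← SparseVec.card_eq_choose]
  calc ∑ x, ((c.enc x).length : ℝ) ≤ ∑ _x : SparseVec n r, (L : ℝ) :=
        Finset.sum_le_sum fun x _ => by exact_mod_cast h x
    _ = L * Fintype.card (SparseVec n r) := by simp [mul_comm]

theorem exists_expLenA_le (r d : ℕ) : ∃ c₂ > 0, ∀ n : ℕ, 0 < n →
    ∃ c : AdaptiveLDC r d n, expLenA c ≤ c₂ * (n : ℝ) ^ ((r : ℝ) / (r * d + 1 : ℝ)) := by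
  obtain ⟨K, hK⟩ := exists_adaptiveLDC_length_le r d
  refine ⟨(K + 1) * 2 ^ r, by positivity, fun n hn => ?_⟩
  have hn1 : (1 : ℝ) ≤ n := by exact_mod_cast hn
  set μ : ℝ := (n : ℝ) ^ ((1 : ℝ) / (r * d + 1 : ℝ))
  have hμ1 : 1 ≤ μ := Real.one_le_rpow hn1 (by positivity)
  have hμpow (j : ℕ) : μ ^ j = (n : ℝ) ^ ((j : ℝ) / (r * d + 1 : ℝ)) := by
    rw [← Real.rpow_natCast, ← Real.rpow_mul (by positivity)]
    ring_nf
  have hnm : n ≤ ⌈μ⌉₊ ^ (r * d + 1) := by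
    have : (n : ℝ) ≤ (⌈μ⌉₊ : ℝ) ^ (r * d + 1) := by
      calc (n : ℝ) = μ ^ (r * d + 1) := by
            rw [hμpow]; push_cast; rw [div_self (by positivity), Real.rpow_one]
        _ ≤ _ := pow_le_pow_left₀ (by positivity) (Nat.le_ceil μ) _
    exact_mod_cast this
  obtain ⟨c, hc⟩ := hK n ⌈μ⌉₊ (Nat.ceil_pos.mpr (by linarith)).ne' hnm
  refine ⟨c, (expLenA_le_of_length_le c hc).trans ?_⟩
  have hceil : (⌈μ⌉₊ : ℝ) ≤ 2 * μ := by linarith [Nat.ceil_lt_add_one (by linarith : 0 ≤ μ)]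
  calc ((K * ⌈μ⌉₊ ^ r : ℕ) : ℝ) ≤ (K + 1) * (2 * μ) ^ r := by
        push_cast
        gcongr
        linarith
    _ = (K + 1) * 2 ^ r * (n : ℝ) ^ ((r : ℝ) / (r * d + 1 : ℝ)) := by
        rw [mul_pow, hμpow]; ring

theorem fixed_r_d_scaling_general (r d : ℕ) (hr : 1 ≤ r) :
    ∃ c1 c2 : ℝ, 0 < c1 ∧ 0 < c2 ∧ ∀ᶠ n : ℕ in atTop,
      c1 * (n : ℝ) ^ ((r : ℝ) / (r * d + 1 : ℝ)) ≤
          sInf {L : ℝ | ∃ c : AdaptiveLDC r d n, expLenA c = L} ∧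
      sInf {L : ℝ | ∃ c : AdaptiveLDC r d n, expLenA c = L} ≤
          c2 * (n : ℝ) ^ ((r : ℝ) / (r * d + 1 : ℝ)) := by
  obtain ⟨c₁, hc₁, hlower⟩ := eventually_le_expLenA r d hr
  obtain ⟨c₂, hc₂, hupper⟩ := exists_expLenA_le r d
  refine ⟨c₁, c₂, hc₁, hc₂, ?_⟩
  filter_upwards [hlower, eventually_gt_atTop 0] with n hn hn0
  obtain ⟨c, hc⟩ := hupper n hn0
  have hbdd : BddBelow {L : ℝ | ∃ c : AdaptiveLDC r d n, expLenA c = L} :=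
    ⟨0, by rintro _ ⟨c', rfl⟩; exact expLenA_nonneg c'⟩
  exact ⟨le_csInf ⟨_, c, rfl⟩ (by rintro _ ⟨c', rfl⟩; exact hn c'),
    (csInf_le hbdd ⟨c, rfl⟩).trans hc⟩

/-- For fixed `r, d`, the optimal expected length of adaptive `(r,d,n)`-locally decodable
codes scales as `Θ(n^{r/(rd+1)})`. -/
theorem fixed_r_d_scaling (r d : ℕ) (hr : 1 ≤ r) (hd : 1 ≤ d) :
    ∃ c1 c2 : ℝ, 0 < c1 ∧ 0 < c2 ∧ ∀ᶠ n : ℕ in atTop,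
      c1 * (n : ℝ) ^ ((r : ℝ) / (r * d + 1 : ℝ)) ≤
          sInf {L : ℝ | ∃ c : AdaptiveLDC r d n, expLenA c = L} ∧
      sInf {L : ℝ | ∃ c : AdaptiveLDC r d n, expLenA c = L} ≤
          c2 * (n : ℝ) ^ ((r : ℝ) / (r * d + 1 : ℝ)) :=
  fixed_r_d_scaling_general r d hr
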